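/- arXiv:1111.2554 — 4 statements merged into one kernel-verified Lean document; each statement's English description precedes it below -/
import Mathlib

section
/- For all r, p ∈ Q_E, the matching index of the tuned rational satisfies ⟦τ_r(p)⟧ = −⟦r⟧·⟦p⟧. -/
open Filter Set
open scoped Classical

noncomputable section

/-- The Gauss map `G(x) = 1/x - ⌊1/x⌋` for `x ≠ 0`, `G(0) = 0`. -/
def gaussMap (x : ℝ) : ℝ := if x = 0 then 0 else 1 / x - ⌊1 / x⌋

/-- The value of the finite continued fraction `[0; a₁, …, aₙ]`. -/
def cfVal : List ℕ+ → ℝ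
  | [] => 0
  | a :: l => 1 / ((a : ℝ) + cfVal l)

/-- The value of the infinite continued fraction `[0; a₁, a₂, …]`
(the limit of the convergents). -/
def cfValInf (a : ℕ → ℕ+) : ℝ :=
  limUnder atTop (fun n => cfVal (List.ofFn fun i : Fin n => a i))

/-- The purely periodic sequence repeating the string `S`. -/
def perSeq (S : List ℕ+) : ℕ → ℕ+ := fun n => S.getD (n % S.length) 1

/-- `[0; overline{S}]`. -/
def cfPer (S : List ℕ+) : ℝ := cfValInf (perSeq S)

/-- The eventually periodic sequence starting with `T` and then repeating `S`. -/
def preperSeq (T S : List ℕ+) : ℕ → ℕ+ :=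
  fun n => if n < T.length then T.getD n 1 else S.getD ((n - T.length) % S.length) 1

/-- The continued fraction expansion of `r` of even length (when it exists). -/
def evenExp (r : ℝ) : List ℕ+ :=
  if h : ∃ S : List ℕ+, S ≠ [] ∧ Even S.length ∧ cfVal S = r then h.choose else []

/-- The continued fraction expansion of `r` of odd length (when it exists). -/
def oddExp (r : ℝ) : List ℕ+ :=
  if h : ∃ S : List ℕ+, S ≠ [] ∧ Odd S.length ∧ cfVal S = r then h.choose else []

/-- The golden ratio `g = (√5 - 1)/2`. -/
def gGolden : ℝ := (Real.sqrt 5 - 1) / 2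

/-- The quadratic interval `I_r = ([0; overline{S₁}], [0; overline{S₀}])`. -/
def quadInt (r : ℝ) : Set ℝ := Set.Ioo (cfPer (oddExp r)) (cfPer (evenExp r))

/-- The bifurcation (exceptional) set `E = [0,g] \ ⋃_{r ∈ ℚ ∩ (0,1)} I_r`. -/
def ESet : Set ℝ :=
  Set.Icc 0 gGolden \
    ⋃ r ∈ {x : ℝ | x ∈ Set.Ioo (0 : ℝ) 1 ∧ ∃ q : ℚ, (q : ℝ) = x}, quadInt r

/-- `Q_E`: the set of rationals `r ∈ (0,1)` whose quadratic interval `I_r` is maximal,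
i.e. is a connected component of `[0,g] \ E`. -/
def QE : Set ℝ :=
  {r | r ∈ Set.Ioo (0 : ℝ) 1 ∧ (∃ q : ℚ, (q : ℝ) = r) ∧
    ∃ x ∈ quadInt r, connectedComponentIn (Set.Icc 0 gGolden \ ESet) x = quadInt r}

/-- `ω(r) = [0; S₁ overline{S₀}]`. -/
def omegaPt (r : ℝ) : ℝ := cfValInf (preperSeq (oddExp r) (evenExp r))

/-- The tuning window `W_r = [ω(r), α₀)`. -/
def Wwin (r : ℝ) : Set ℝ := Set.Ico (omegaPt r) (cfPer (evenExp r))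

/-- The `(n+1)`-st continued fraction digit of `x`: `a_{n+1} = ⌊1/G^n(x)⌋`. -/
def cfDigit (x : ℝ) (n : ℕ) : ℕ+ := (⌊1 / (gaussMap^[n] x)⌋).toNat.toPNat'

/-- Concatenation of the first `n` blocks of a sequence of strings. -/
def blocksCat (B : ℕ → List ℕ+) : ℕ → List ℕ+
  | 0 => []
  | n + 1 => blocksCat B n ++ B n

/-- The infinite string obtained by concatenating all the blocks `B 0, B 1, …`
(each block assumed nonempty). -/
def flattenBlocks (B : ℕ → List ℕ+) : ℕ → ℕ+ :=
  fun n => (blocksCat B (n + 1)).getD n 1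

/-- Tuning substitution on a single digit: `a ↦ S₁ S₀^{a-1}`. -/
def tuneDigit (r : ℝ) (a : ℕ+) : List ℕ+ :=
  oddExp r ++ (List.replicate ((a : ℕ) - 1) (evenExp r)).flatten

/-- Tuning substitution on finite strings:
`(a₁, …, aₙ) ↦ S₁ S₀^{a₁-1} S₁ S₀^{a₂-1} ⋯ S₁ S₀^{aₙ-1}`. -/
def tuneList (r : ℝ) (A : List ℕ+) : List ℕ+ := (A.map (tuneDigit r)).flatten

/-- The tuning map `τ_r : [0,1] → [0,r]`:  `τ_r(0) = ω(r)`,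
`τ_r([0; a₁, a₂, …]) = [0; S₁ S₀^{a₁-1} S₁ S₀^{a₂-1} …]`, the same substitution
being applied to a finite expansion when the argument is rational. -/
def tune (r : ℝ) (x : ℝ) : ℝ :=
  if x = 0 then omegaPt r
  else if ∃ q : ℚ, (q : ℝ) = x then cfVal (tuneList r (evenExp x))
  else cfValInf (flattenBlocks (fun k => tuneDigit r (cfDigit x k)))

/-- The matching index `⟦A⟧ = a₁ - a₂ + a₃ - ⋯` of a finite string. -/
def mIdx : List ℕ+ → ℤ
  | [] => 0
  | a :: l => (a : ℤ) - mIdx l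

/-- The matching index of a rational number: `⟦r⟧ = ⟦S₀(r)⟧`. -/
def mIdxR (r : ℝ) : ℤ := mIdx (evenExp r)

/-- `B(t) = {x ∈ [0,1] : G^k(x) ≥ t for all k}`. -/
def BSet (t : ℝ) : Set ℝ := {x ∈ Set.Icc (0 : ℝ) 1 | ∀ k : ℕ, gaussMap^[k] x ≥ t}

/-- The regular Cantor set `K(Σ)`: numbers whose continued fraction expansion is an
infinite concatenation of strings from `Σ`. -/
def KSet (SS : Set (List ℕ+)) : Set ℝ :=
  {x | ∃ B : ℕ → List ℕ+, (∀ n, B n ∈ SS) ∧ (∀ n, B n ≠ []) ∧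
    x = cfValInf (flattenBlocks B)}

/-- The set of untuned parameters `UT = [0,g] \ ⋃_{r ∈ Q_E} W_r`. -/
def UTset : Set ℝ := Set.Icc 0 gGolden \ ⋃ r ∈ QE, Wwin r

/-- The set `Q_UT` of untuned rationals. -/
def QUT : Set ℝ := {r ∈ QE | ¬ ∃ s ∈ QE, ∃ p ∈ QE, r = tune s p}

/-- The order `S << T` on finite strings of positive integers. -/
def strLL (S T : List ℕ+) : Prop :=
  ∃ k, k < S.length ∧ k < T.length ∧ (∀ i < k, S.getD i 1 = T.getD i 1) ∧
    (if k % 2 = 1 then S.getD k 1 < T.getD k 1 else T.getD k 1 < S.getD k 1)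

/-- A finite string is dominant if it has even length and is `<<`-smaller than
all of its proper suffixes. -/
def Dominant (S : List ℕ+) : Prop :=
  Even S.length ∧ ∀ A B : List ℕ+, A ≠ [] → B ≠ [] → S = A ++ B → strLL S B

/-- The α-continued fraction transformation `T_α`. -/
def Talpha (α : ℝ) (x : ℝ) : ℝ :=
  if x = 0 then 0 else 1 / |x| - ⌊1 / |x| + 1 - α⌋

end

/-!
Since `p` is rational, `τ_r(p)` is the finite continued fraction of the string obtained from
`S₀(p)` by the substitution `a ↦ S₁(r) S₀(r)^{a-1}`. Every block has odd length, so this string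
has even length and, by uniqueness of the even-length expansion, it is `S₀(τ_r(p))`.
The matching index changes sign across an odd-length prefix, so the digit `a` contributes
`±(⟦S₁(r)⟧ - (a - 1)⟦S₀(r)⟧)` with alternating signs; over the even number of digits of `S₀(p)`
the constant parts cancel in pairs and `-⟦S₀(r)⟧⟦S₀(p)⟧` remains.
-/

lemma cfVal_nonneg (S : List ℕ+) : 0 ≤ cfVal S := by
  induction S with
  | nil => exact le_rfl
  | cons a l ih => exact div_nonneg zero_le_one (add_nonneg (Nat.cast_nonneg _) ih)

lemma cfVal_pos {S : List ℕ+} (hS : S ≠ []) : 0 < cfVal S := by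
  cases S with
  | nil => exact absurd rfl hS
  | cons a l => exact div_pos one_pos (add_pos_of_pos_of_nonneg (by positivity) (cfVal_nonneg l))

lemma cfVal_le_one (S : List ℕ+) : cfVal S ≤ 1 := by
  cases S with
  | nil => exact zero_le_one
  | cons a l =>
    have ha : (1 : ℝ) ≤ a := Nat.one_le_cast.2 a.pos
    exact div_le_one_of_le₀ (by linarith [cfVal_nonneg l]) (by linarith [cfVal_nonneg l])

lemma cfVal_eq_zero_iff {S : List ℕ+} : cfVal S = 0 ↔ S = [] :=
  ⟨fun h => by_contra fun hS => (cfVal_pos hS).ne' h, fun h => h ▸ rfl⟩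

lemma cfVal_eq_one_iff {S : List ℕ+} : cfVal S = 1 ↔ S = [1] := by
  refine ⟨fun h => ?_, fun h => by simp [h, cfVal]⟩
  cases S with
  | nil => simp [cfVal] at h
  | cons a l =>
    have ha : (1 : ℝ) ≤ a := Nat.one_le_cast.2 a.pos
    have hsum : (a : ℝ) + cfVal l = 1 := by
      rw [cfVal, div_eq_one_iff_eq (by linarith [cfVal_nonneg l])] at h
      exact h.symm
    have hl : cfVal l = 0 := by linarith [cfVal_nonneg l]
    have ha1 : a = 1 := PNat.coe_eq_one_iff.1 (by exact_mod_cast (by linarith : (a : ℝ) = 1))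
    rw [cfVal_eq_zero_iff.1 hl, ha1]

/-- The exceptional cases are the two expansions `[0; …, b + 1] = [0; …, b, 1]` of a rational. -/
lemma cfVal_cons_eq_cons {a b : ℕ+} {l m : List ℕ+} (h : cfVal (a :: l) = cfVal (b :: m)) :
    (a = b ∧ cfVal l = cfVal m) ∨ (l = [] ∧ m = [1]) ∨ (l = [1] ∧ m = []) := by
  have hsum : (a : ℝ) + cfVal l = b + cfVal m := by
    simpa only [cfVal, one_div, inv_inj] using h
  have hl := cfVal_nonneg l
  have hl' := cfVal_le_one l
  have hm := cfVal_nonneg m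
  have hm' := cfVal_le_one m
  have hdiff : (((a : ℤ) - b : ℤ) : ℝ) = cfVal m - cfVal l := by push_cast; linarith
  have hlo : -1 ≤ (a : ℤ) - b := by exact_mod_cast (by linarith : (-1 : ℝ) ≤ ((a : ℤ) - b : ℤ))
  have hhi : (a : ℤ) - b ≤ 1 := by exact_mod_cast (by linarith : (((a : ℤ) - b : ℤ) : ℝ) ≤ 1)
  obtain hd | hd | hd : (a : ℤ) - b = 0 ∨ (a : ℤ) - b = 1 ∨ (a : ℤ) - b = -1 := by omega
  · refine Or.inl ⟨PNat.coe_inj.1 (by omega), ?_⟩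
    rw [hd, Int.cast_zero] at hdiff
    linarith
  · rw [hd, Int.cast_one] at hdiff
    exact Or.inr (Or.inl ⟨cfVal_eq_zero_iff.1 (by linarith), cfVal_eq_one_iff.1 (by linarith)⟩)
  · rw [hd, Int.cast_neg, Int.cast_one] at hdiff
    exact Or.inr (Or.inr ⟨cfVal_eq_one_iff.1 (by linarith), cfVal_eq_zero_iff.1 (by linarith)⟩)

lemma cfVal_injective_of_even_add_length :
    ∀ {S T : List ℕ+}, cfVal S = cfVal T → Even (S.length + T.length) → S = T
  | [], T, h, _ => (cfVal_eq_zero_iff.1 h.symm).symm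
  | _ :: _, [], h, _ => cfVal_eq_zero_iff.1 h
  | a :: l, b :: m, h, hpar => by
    rcases cfVal_cons_eq_cons h with ⟨rfl, hlm⟩ | ⟨rfl, rfl⟩ | ⟨rfl, rfl⟩
    · have hpar' : Even (l.length + m.length) := by
        simpa [List.length_cons, ← add_assoc, Nat.even_add_one, add_right_comm] using hpar
      rw [cfVal_injective_of_even_add_length hlm hpar']
    all_goals simp [Nat.even_iff] at hpar

lemma cfVal_append_succ (S : List ℕ+) (b : ℕ+) :
    cfVal (S ++ [b + 1]) = cfVal (S ++ [b, 1]) := by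
  induction S with
  | nil => simp [cfVal]
  | cons c l ih => simp only [List.cons_append, cfVal, ih]

lemma exists_cfVal_append_succ_eq (q : ℚ) (h0 : 0 < q) (h1 : q < 1) :
    ∃ (S : List ℕ+) (b : ℕ+), cfVal (S ++ [b + 1]) = q := by
  have hinv : 1 < q⁻¹ := (one_lt_inv₀ h0).2 h1
  have hn : 0 < ⌊q⁻¹⌋₊ := Nat.floor_pos.2 hinv.le
  have hfract : Int.fract q⁻¹ = q⁻¹ - ⌊q⁻¹⌋₊ := by
    rw [Int.fract, natCast_floor_eq_intCast_floor (by positivity)]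
  rcases (Int.fract_nonneg q⁻¹).eq_or_lt with hzero | hpos
  · have hqinv : q⁻¹ = ⌊q⁻¹⌋₊ := by linarith
    have hn2 : 1 < ⌊q⁻¹⌋₊ := by exact_mod_cast hqinv ▸ hinv
    obtain ⟨m, hm⟩ := Nat.exists_eq_add_of_le' hn2
    have hq : (q : ℝ) = ((m : ℝ) + 2)⁻¹ := by
      rw [← inv_inv (q : ℝ), ← Rat.cast_inv, hqinv, hm]
      push_cast
      rfl
    refine ⟨[], m.succPNat, ?_⟩
    simp [cfVal, hq]
    ring
  · have hnum : (Int.fract q⁻¹).num < q.num := Rat.fract_inv_num_lt_num_of_pos h0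
    obtain ⟨S, b, hS⟩ := exists_cfVal_append_succ_eq _ hpos (Int.fract_lt_one q⁻¹)
    refine ⟨⌊q⁻¹⌋₊.toPNat' :: S, b, ?_⟩
    have hq : (q : ℝ) = (⌊q⁻¹⌋₊ + Int.fract q⁻¹ : ℚ)⁻¹ := by
      rw [hfract, add_sub_cancel, inv_inv]
    rw [List.cons_append, cfVal, hS, hq, Nat.toPNat'_coe, if_pos hn]
    push_cast
    rw [one_div]
termination_by q.num.toNat
decreasing_by have := Rat.num_pos.2 h0; omega

lemma exists_even_and_odd_cfVal_eq {x : ℝ} (hx : x ∈ Ioo 0 1) (hq : ∃ q : ℚ, (q : ℝ) = x) :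
    (∃ S : List ℕ+, S ≠ [] ∧ Even S.length ∧ cfVal S = x) ∧
      (∃ S : List ℕ+, S ≠ [] ∧ Odd S.length ∧ cfVal S = x) := by
  obtain ⟨q, rfl⟩ := hq
  obtain ⟨S, b, hS⟩ := exists_cfVal_append_succ_eq q (by exact_mod_cast hx.1)
    (by exact_mod_cast hx.2)
  have hS' : cfVal (S ++ [b, 1]) = q := by rw [← cfVal_append_succ, hS]
  rcases Nat.even_or_odd S.length with he | ho
  · exact ⟨⟨S ++ [b, 1], by simp, by simpa using he.add even_two, hS'⟩,
      ⟨S ++ [b + 1], by simp, by simpa using he.add_one, hS⟩⟩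
  · exact ⟨⟨S ++ [b + 1], by simp, by simpa using ho.add_one, hS⟩,
      ⟨S ++ [b, 1], by simp, by simpa using ho.add_even even_two, hS'⟩⟩

lemma evenExp_spec {x : ℝ} (h : ∃ S : List ℕ+, S ≠ [] ∧ Even S.length ∧ cfVal S = x) :
    evenExp x ≠ [] ∧ Even (evenExp x).length ∧ cfVal (evenExp x) = x := by
  rw [evenExp, dif_pos h]
  exact h.choose_spec

lemma oddExp_spec {x : ℝ} (h : ∃ S : List ℕ+, S ≠ [] ∧ Odd S.length ∧ cfVal S = x) :
    oddExp x ≠ [] ∧ Odd (oddExp x).length ∧ cfVal (oddExp x) = x := by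
  rw [oddExp, dif_pos h]
  exact h.choose_spec

lemma evenExp_cfVal {S : List ℕ+} (hS : S ≠ []) (he : Even S.length) : evenExp (cfVal S) = S := by
  obtain ⟨-, he', hval⟩ := evenExp_spec ⟨S, hS, he, rfl⟩
  exact cfVal_injective_of_even_add_length hval (he'.add he)

lemma mIdx_append (L M : List ℕ+) : mIdx (L ++ M) = mIdx L + (-1) ^ L.length * mIdx M := by
  induction L with
  | nil => simp [mIdx]
  | cons a l ih =>
    rw [List.cons_append, mIdx, mIdx, ih, List.length_cons, pow_succ]
    ring

lemma mIdx_flatten_replicate (k : ℕ) {S : List ℕ+} (hS : Even S.length) :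
    mIdx (List.replicate k S).flatten = k * mIdx S := by
  induction k with
  | zero => simp [mIdx]
  | succ k ih =>
    rw [List.replicate_succ, List.flatten_cons, mIdx_append, hS.neg_one_pow, ih]
    push_cast
    ring

section Tuning

variable {r : ℝ}

lemma tuneList_cons (a : ℕ+) (A : List ℕ+) :
    tuneList r (a :: A) = tuneDigit r a ++ tuneList r A := rfl

lemma odd_length_tuneDigit (ho : Odd (oddExp r).length) (he : Even (evenExp r).length)
    (a : ℕ+) : Odd (tuneDigit r a).length := by
  simpa [tuneDigit] using ho.add_even (he.mul_left _)

lemma mIdx_tuneDigit (ho : Odd (oddExp r).length) (he : Even (evenExp r).length) (a : ℕ+) :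
    mIdx (tuneDigit r a) = mIdx (oddExp r) - ((a : ℤ) - 1) * mIdx (evenExp r) := by
  rw [tuneDigit, mIdx_append, mIdx_flatten_replicate _ he, ho.neg_one_pow,
    Nat.cast_sub (Nat.one_le_of_lt a.pos), Nat.cast_one]
  ring

lemma tuneList_ne_nil (ho : Odd (oddExp r).length) {A : List ℕ+} (hA : A ≠ []) :
    tuneList r A ≠ [] := by
  obtain ⟨a, A, rfl⟩ := List.exists_cons_of_ne_nil hA
  rw [tuneList_cons, tuneDigit]
  simp [List.ne_nil_of_length_pos ho.pos]

lemma even_length_tuneList_iff (ho : Odd (oddExp r).length) (he : Even (evenExp r).length)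
    (A : List ℕ+) : Even (tuneList r A).length ↔ Even A.length := by
  induction A with
  | nil => simp [tuneList]
  | cons a A ih =>
    simp [tuneList_cons, Nat.even_add, Nat.even_add_one, ih,
      Nat.not_even_iff_odd.2 (odd_length_tuneDigit ho he a)]

/-- Each pair of digits `a, b` contributes `⟦S₁ S₀^{a-1}⟧ - ⟦S₁ S₀^{b-1}⟧ = -(a - b)⟦S₀⟧`. -/
lemma mIdx_tuneList_of_even (ho : Odd (oddExp r).length) (he : Even (evenExp r).length) :
    ∀ {A : List ℕ+}, Even A.length → mIdx (tuneList r A) = -(mIdx (evenExp r) * mIdx A)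
  | [], _ => by simp [tuneList, mIdx]
  | [_], h => by simp at h
  | a :: b :: A, h => by
    have hA : Even A.length := by simpa [Nat.even_add_one] using h
    rw [tuneList_cons, tuneList_cons, mIdx_append, mIdx_append,
      (odd_length_tuneDigit ho he a).neg_one_pow, (odd_length_tuneDigit ho he b).neg_one_pow,
      mIdx_tuneDigit ho he, mIdx_tuneDigit ho he, mIdx_tuneList_of_even ho he hA, mIdx, mIdx]
    ring

end Tuning

/-- For all `r, p ∈ Q_E`, `⟦τ_r(p)⟧ = -⟦r⟧·⟦p⟧`. -/
theorem matching_index_of_tuning (r p : ℝ) (hr : r ∈ QE) (hp : p ∈ QE) :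
    mIdxR (tune r p) = -(mIdxR r * mIdxR p) := by
  obtain ⟨hr01, hrq, -⟩ := hr
  obtain ⟨hp01, hpq, -⟩ := hp
  obtain ⟨hre, hro⟩ := exists_even_and_odd_cfVal_eq hr01 hrq
  have he := (evenExp_spec hre).2.1
  have ho := (oddExp_spec hro).2.1
  obtain ⟨hpne, hpe, -⟩ := evenExp_spec (exists_even_and_odd_cfVal_eq hp01 hpq).1
  have htune : tune r p = cfVal (tuneList r (evenExp p)) := by
    rw [tune, if_neg hp01.1.ne', if_pos hpq]
  rw [mIdxR, htune, evenExp_cfVal (tuneList_ne_nil ho hpne)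
    ((even_length_tuneList_iff ho he _).2 hpe), mIdx_tuneList_of_even ho he hpe, mIdxR, mIdxR]
end

section
/- Let I ⊆ ℝ be an interval, let η ∈ (0,1), and let f : I → ℝ be Hölder continuous of exponent η, i.e. there is a constant K with |f(x) − f(y)| ≤ K|x − y|^η for all x, y ∈ I. Suppose there exists a set A ⊆ I, closed in I, such that f is locally constant at every point x ∈ I \ A, and suppose the Hausdorff dimension of A is strictly less than η. Then f is constant on I. -/
open Filter Set
open scoped Classical

/-!
A locally constant function takes only countably many values, so `f (I \ A)` is Lebesgue-null;
a Hölder map of exponent `η` at most divides Hausdorff dimension by `η`, so `dimH (f A) < 1` and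
`f A` is Lebesgue-null too. But `f` is continuous, so `f I` is an interval, and a null interval is a
point.
-/

open Topology MeasureTheory
open scoped NNReal

theorem HolderOnWith.of_dist_le {X Y : Type*} [PseudoMetricSpace X] [PseudoMetricSpace Y]
    {C r : ℝ≥0} {f : X → Y} {s : Set X}
    (h : ∀ x ∈ s, ∀ y ∈ s, dist (f x) (f y) ≤ C * dist x y ^ (r : ℝ)) :
    HolderOnWith C r f s := by
  intro x hx y hy
  calc edist (f x) (f y) = ENNReal.ofReal (dist (f x) (f y)) := edist_dist _ _
    _ ≤ ENNReal.ofReal (C * dist x y ^ (r : ℝ)) := ENNReal.ofReal_le_ofReal (h x hx y hy)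
    _ = C * edist x y ^ (r : ℝ) := by
      rw [ENNReal.ofReal_mul C.coe_nonneg, ENNReal.ofReal_coe_nnreal,
        ← ENNReal.ofReal_rpow_of_nonneg dist_nonneg r.coe_nonneg, edist_dist]

theorem HolderOnWith.volume_image_eq_zero {X : Type*} [EMetricSpace X] {C r : ℝ≥0}
    {f : X → ℝ} {s : Set X} (hf : HolderOnWith C r f s) (hr : 0 < r) (hs : dimH s < r) :
    volume (f '' s) = 0 := by
  have hdim : dimH (f '' s) < (1 : ℝ≥0) := by
    refine (hf.dimH_image_le hr).trans_lt ?_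
    rwa [ENNReal.coe_one, ENNReal.div_lt_iff (Or.inl (by exact_mod_cast hr.ne')) (Or.inl (by simp)),
      one_mul]
  simpa [hausdorffMeasure_real] using hausdorffMeasure_of_dimH_lt hdim

theorem Set.countable_image_of_eventually_eq {X Y : Type*} [TopologicalSpace X]
    [SecondCountableTopology X] {f : X → Y} {s : Set X}
    (h : ∀ x ∈ s, ∀ᶠ y in 𝓝[s] x, f y = f x) : (f '' s).Countable := by
  choose! U hU hUf using fun x hx => (h x hx).exists_mem
  obtain ⟨t, hts, htc, hst⟩ := TopologicalSpace.countable_cover_nhdsWithin hU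
  refine (htc.image f).mono ?_
  rintro _ ⟨z, hz, rfl⟩
  obtain ⟨x, hxt, hzx⟩ := mem_iUnion₂.1 (hst hz)
  exact ⟨x, hxt, (hUf x (hts hxt) z hzx).symm⟩

theorem Set.OrdConnected.eq_of_volume_image_eq_zero {I : Set ℝ} (hI : I.OrdConnected)
    {f : ℝ → ℝ} (hf : ContinuousOn f I) (hnull : volume (f '' I) = 0)
    {x y : ℝ} (hx : x ∈ I) (hy : y ∈ I) : f x = f y := by
  have hsub : uIcc (f x) (f y) ⊆ f '' I :=
    (intermediate_value_uIcc (hf.mono (hI.uIcc_subset hx hy))).trans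
      (image_mono (hI.uIcc_subset hx hy))
  have hvol : ENNReal.ofReal |f y - f x| = 0 := by
    rw [← Real.volume_interval]
    exact measure_mono_null hsub hnull
  rw [ENNReal.ofReal_eq_zero, abs_nonpos_iff, sub_eq_zero] at hvol
  exact hvol.symm

theorem holder_locally_constant_off_small_set_general (I : Set ℝ) (hI : I.OrdConnected)
    (η : ℝ) (f : ℝ → ℝ) (K : ℝ)
    (hf : ∀ x ∈ I, ∀ y ∈ I, |f x - f y| ≤ K * |x - y| ^ η)
    (A : Set ℝ) (hA : A ⊆ I)
    (hlc : ∀ x ∈ I \ A, ∃ U ∈ nhdsWithin x I, ∀ y ∈ U, f y = f x)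
    (hdim : dimH A < ENNReal.ofReal η) :
    ∀ x ∈ I, ∀ y ∈ I, f x = f y := by
  have hη : 0 < η := ENNReal.ofReal_pos.1 (pos_of_gt hdim)
  have hr : 0 < η.toNNReal := Real.toNNReal_pos.2 hη
  have hholder : HolderOnWith K.toNNReal η.toNNReal f I :=
    HolderOnWith.of_dist_le fun x hx y hy => by
      rw [Real.coe_toNNReal η hη.le, Real.dist_eq, Real.dist_eq]
      exact (hf x hx y hy).trans (by gcongr; exact Real.le_coe_toNNReal K)
  have hnullA : volume (f '' A) = 0 :=
    (hholder.mono hA).volume_image_eq_zero hr hdim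
  have hnullRest : volume (f '' (I \ A)) = 0 := by
    refine (countable_image_of_eventually_eq fun x hx => ?_).measure_zero _
    obtain ⟨U, hU, hUf⟩ := hlc x hx
    exact (eventually_of_mem hU hUf).filter_mono (nhdsWithin_mono x sdiff_subset)
  have hnull : volume (f '' I) = 0 := by
    refine measure_mono_null ?_ (measure_union_null hnullA hnullRest)
    rw [← image_union, union_sdiff_cancel hA]
  exact fun x hx y hy => hI.eq_of_volume_image_eq_zero (hholder.continuousOn hr) hnull hx hy

/-- A Hölder continuous function of exponent `η` on an interval `I`, locally
constant off a set `A` closed in `I` with `dimH A < η`, is constant on `I`. -/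
theorem holder_locally_constant_off_small_set (I : Set ℝ) (hI : I.OrdConnected)
    (η : ℝ) (hη : η ∈ Set.Ioo (0 : ℝ) 1) (f : ℝ → ℝ) (K : ℝ)
    (hf : ∀ x ∈ I, ∀ y ∈ I, |f x - f y| ≤ K * |x - y| ^ η)
    (A : Set ℝ) (hA : A ⊆ I) (hAclosed : closure A ∩ I ⊆ A)
    (hlc : ∀ x ∈ I \ A, ∃ U ∈ nhdsWithin x I, ∀ y ∈ U, f y = f x)
    (hdim : dimH A < ENNReal.ofReal η) :
    ∀ x ∈ I, ∀ y ∈ I, f x = f y :=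
  holder_locally_constant_off_small_set_general I hI η f K hf A hA hlc hdim
end

section
/- Let S₀ be a dominant string and let B be a nonempty proper suffix of S₀ of even length. Then for every m ≥ 1 the concatenation S₀^m B (m copies of S₀ followed by B) is a dominant string. -/
open Filter Set
open scoped Classical

/-! A nonempty proper suffix `D` of `W = S₀^m B` either has the form `S₀^k B` with `k < m`, or
begins with a nonempty proper suffix `X` of `S₀`. In the second case dominance gives `S₀ << X`,
which lifts to `W << D` because `S₀` is a prefix of `W` and `<<` is decided within the shorter
string. In the first case `W = S₀^k (S₀^(m-k) B)`: the relation `S₀ << B` lifts to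
`S₀^(m-k) B << B`, and prepending the common prefix `S₀^k` keeps it, as that prefix has even
length. -/

open List

theorem List.IsPrefix.getD_eq {α : Type*} {l₁ l₂ : List α} (h : l₁ <+: l₂) {i : ℕ}
    (hi : i < l₁.length) (d : α) : l₂.getD i d = l₁.getD i d := by
  obtain ⟨t, rfl⟩ := h
  exact getD_append _ _ _ _ hi

theorem List.prefix_flatten_replicate_append {α : Type*} (S R : List α) {m : ℕ} (hm : 0 < m) :
    S <+: (replicate m S).flatten ++ R := by
  obtain ⟨j, rfl⟩ := Nat.exists_eq_succ_of_ne_zero hm.ne'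
  rw [replicate_succ, flatten_cons, append_assoc]
  exact prefix_append _ _

theorem List.suffix_flatten_replicate_append_cases {α : Type*} {S B D : List α}
    (hBS : B <:+ S) (hD : D ≠ []) {m : ℕ} (hDW : D <:+ (replicate m S).flatten ++ B) :
    (∃ k ≤ m, D = (replicate k S).flatten ++ B) ∨
      ∃ Z X, Z ≠ [] ∧ X ≠ [] ∧ S = Z ++ X ∧ X <+: D := by
  induction m with
  | zero =>
    obtain ⟨t, rfl⟩ : D <:+ B := by simpa using hDW
    obtain ⟨u, rfl⟩ := hBS
    rcases eq_or_ne t [] with rfl | ht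
    · exact .inl ⟨0, le_rfl, by simp⟩
    · exact .inr ⟨u ++ t, D, by simp [ht], hD, by simp, prefix_refl D⟩
  | succ m ih =>
    rw [replicate_succ, flatten_cons, append_assoc] at hDW
    obtain ⟨A, hA⟩ := hDW
    rcases append_eq_append_iff.1 hA with ⟨X, rfl, rfl⟩ | ⟨Y, -, hY⟩
    · rcases eq_or_ne A [] with rfl | hA
      · exact .inl ⟨m + 1, le_rfl, by simp [replicate_succ]⟩
      rcases eq_or_ne X [] with rfl | hX
      · exact (ih (suffix_refl _)).imp_left fun ⟨k, hk, e⟩ ↦ ⟨k, hk.trans m.le_succ, e⟩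
      · exact .inr ⟨A, X, hA, hX, rfl, prefix_append _ _⟩
    · exact (ih ⟨Y, hY.symm⟩).imp_left fun ⟨k, hk, e⟩ ↦ ⟨k, hk.trans m.le_succ, e⟩

theorem strLL.mono_prefix {S X U V : List ℕ+} (h : strLL S X) (hS : S <+: U) (hX : X <+: V) :
    strLL U V := by
  obtain ⟨k, hkS, hkX, hagree, hcmp⟩ := h
  have hU : ∀ i ≤ k, U.getD i 1 = S.getD i 1 := fun i hi ↦ hS.getD_eq (by omega) 1
  have hV : ∀ i ≤ k, V.getD i 1 = X.getD i 1 := fun i hi ↦ hX.getD_eq (by omega) 1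
  refine ⟨k, hkS.trans_le hS.length_le, hkX.trans_le hX.length_le, fun i hi ↦ ?_, ?_⟩
  · rw [hU i hi.le, hV i hi.le, hagree i hi]
  · rwa [hU k le_rfl, hV k le_rfl]

theorem strLL.append_left {U V : List ℕ+} (h : strLL U V) (P : List ℕ+) (hP : Even P.length) :
    strLL (P ++ U) (P ++ V) := by
  obtain ⟨k, hkU, hkV, hagree, hcmp⟩ := h
  have hparity : (P.length + k) % 2 = k % 2 := by
    obtain ⟨r, hr⟩ := hP
    omega
  refine ⟨P.length + k, by simp [hkU], by simp [hkV], fun i hi ↦ ?_, ?_⟩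
  · rcases lt_or_ge i P.length with hiP | hiP
    · rw [getD_append _ _ _ _ hiP, getD_append _ _ _ _ hiP]
    · rw [getD_append_right _ _ _ _ hiP, getD_append_right _ _ _ _ hiP]
      exact hagree _ (by omega)
  · rw [getD_append_right _ _ _ _ (by omega), getD_append_right _ _ _ _ (by omega),
      Nat.add_sub_cancel_left, hparity]
    exact hcmp

/-- If `S₀` is dominant and `B` is a nonempty proper suffix of `S₀` of
even length, then `S₀^m B` is dominant for every `m ≥ 1`. -/
theorem dominant_power_suffix (S₀ B C : List ℕ+) (hdom : Dominant S₀)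
    (hC : C ≠ []) (hB : B ≠ []) (hsplit : S₀ = C ++ B) (hBeven : Even B.length) :
    ∀ m : ℕ, 1 ≤ m → Dominant ((List.replicate m S₀).flatten ++ B) := by
  intro m hm
  have hS₀B : strLL S₀ B := hdom.2 C B hC hB hsplit
  refine ⟨by simpa using (hdom.1.mul_left m).add hBeven, fun A D hA hD hW ↦ ?_⟩
  rcases suffix_flatten_replicate_append_cases ⟨C, hsplit.symm⟩ hD ⟨A, hW.symm⟩ with
    ⟨k, -, rfl⟩ | ⟨Z, X, hZ, hX, hZX, hXD⟩
  · have hkm : k < m := by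
      have hlen := congrArg length hW
      have hApos := length_pos_iff.2 hA
      simp only [length_append, length_flatten, map_replicate, sum_replicate, smul_eq_mul] at hlen
      exact lt_of_mul_lt_mul_right (show k * S₀.length < m * S₀.length by omega) (Nat.zero_le _)
    obtain ⟨j, rfl⟩ := Nat.exists_eq_add_of_lt hkm
    rw [Nat.add_assoc, replicate_add, flatten_append, append_assoc]
    have hlift : strLL ((replicate (j + 1) S₀).flatten ++ B) B :=
      hS₀B.mono_prefix (prefix_flatten_replicate_append S₀ B j.succ_pos) (prefix_refl B)
    exact hlift.append_left (replicate k S₀).flatten (by simpa using hdom.1.mul_left k)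
  · exact (hdom.2 Z X hZ hX hZX).mono_prefix (prefix_flatten_replicate_append S₀ B hm) hXD
end

section
/- A dominant string cannot begin with two equal digits; that is, if S = (s₁, s₂, …, sₙ) is dominant then s₁ ≠ s₂. -/
open Filter Set
open scoped Classical

/-- A dominant string cannot begin with two equal digits. -/
theorem dominant_no_two_equal_start (S : List ℕ+) (hdom : Dominant S) (hne : S ≠ []) :
    S.getD 0 1 ≠ S.getD 1 1 := by
  intro h01
  obtain ⟨heven, hdom'⟩ := hdom
  have hn0 : S.length ≠ 0 := by simpa using hne
  have hn2 : 2 ≤ S.length := by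
    rcases heven with ⟨m, hm⟩; omega
  have hdropD : ∀ m i : ℕ, (S.drop m).getD i 1 = S.getD (m + i) 1 := by
    intro m i
    simp [List.getD_eq_getElem?_getD, List.getElem?_drop]
  have key : ∀ m, 1 ≤ m → m < S.length → strLL S (S.drop m) := by
    intro m h1 h2
    apply hdom' (S.take m) (S.drop m)
    · apply List.ne_nil_of_length_pos; simp; omega
    · apply List.ne_nil_of_length_pos; simp; omega
    · exact (List.take_append_drop m S).symm
  by_cases hall : ∀ i < S.length, S.getD i 1 = S.getD 0 1
  · obtain ⟨k, hk1, hk2, heq, hlt⟩ := key 1 le_rfl (by omega)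
    rw [List.length_drop] at hk2
    have e1 : S.getD k 1 = S.getD 0 1 := hall k hk1
    have e2 : (S.drop 1).getD k 1 = S.getD 0 1 := by
      rw [hdropD]; exact hall _ (by omega)
    rw [e1, e2] at hlt
    split at hlt <;> exact lt_irrefl _ hlt
  · push_neg at hall
    have hex : ∃ i, i < S.length ∧ S.getD i 1 ≠ S.getD 0 1 := by
      obtain ⟨i, h1, h2⟩ := hall; exact ⟨i, h1, h2⟩
    set j := Nat.find hex with hjdef
    obtain ⟨hjn, hjne⟩ := Nat.find_spec hex
    rw [← hjdef] at hjn hjne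
    have hmin : ∀ i < j, S.getD i 1 = S.getD 0 1 := by
      intro i hi
      by_contra hc
      exact (Nat.find_min hex hi) ⟨by omega, hc⟩
    have hj2 : 2 ≤ j := by
      by_contra hc
      have : j = 0 ∨ j = 1 := by omega
      rcases this with h | h <;> rw [h] at hjne
      · exact hjne rfl
      · exact hjne h01.symm
    have hlt0j : S.getD 0 1 < S.getD j 1 := by
      obtain ⟨k, hk1, hk2, heq, hlt⟩ := key (j - 1) (by omega) (by omega)
      rw [List.length_drop] at hk2
      rw [hdropD] at hlt
      match k, hk1, hk2, heq, hlt with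
      | 0, hk1, hk2, heq, hlt =>
        simp only [Nat.zero_mod, Nat.add_zero] at hlt
        rw [hmin (j - 1) (by omega)] at hlt
        exact absurd hlt (lt_irrefl _)
      | 1, hk1, hk2, heq, hlt =>
        simp only [show (1 : ℕ) % 2 = 1 from rfl, if_true] at hlt
        rw [hmin 1 (by omega), show j - 1 + 1 = j from by omega] at hlt
        exact hlt
      | (k + 2), hk1, hk2, heq, hlt =>
        have h1 := heq 1 (by omega)
        rw [hdropD, show j - 1 + 1 = j from by omega, hmin 1 (by omega)] at h1
        exact absurd h1.symm hjne
    obtain ⟨k, hk1, hk2, heq, hlt⟩ := key j (by omega) hjn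
    rw [List.length_drop] at hk2
    rw [hdropD] at hlt
    match k, hk1, hk2, heq, hlt with
    | 0, hk1, hk2, heq, hlt =>
      simp only [Nat.zero_mod, Nat.add_zero] at hlt
      exact absurd hlt (not_lt.mpr hlt0j.le)
    | (k + 1), hk1, hk2, heq, hlt =>
      have h0 := heq 0 (by omega)
      rw [hdropD, Nat.add_zero] at h0
      exact hjne h0.symm
end
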